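/- arXiv:2402.08585 — 3 statements merged into one kernel-verified Lean document; each statement's English description precedes it below -/
import Mathlib

section
/- Let V be a finite-dimensional real inner product space, S, T : V → V linear maps with T symmetric, and U ⊆ V a T-invariant subspace. If for every t ∈ ℝ the subspace e^{tS}(U) is T-invariant, then for every eigenvalue λ of T, the subspace U is invariant under the commutator [S, π_λ] = S∘π_λ − π_λ∘S, where π_λ is the orthogonal projection onto the λ-eigenspace of T. -/
open scoped RealInnerProductSpace
open NormedSpace

/-- If `T` is symmetric and `W` is `T`-invariant, then `W` is invariant under the
orthogonal projection onto any eigenspace of `T`. -/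
lemma projA {V : Type*} [NormedAddCommGroup V] [InnerProductSpace ℝ V]
    [FiniteDimensional ℝ V]
    (T : V →L[ℝ] V) (hT : ∀ x y : V, ⟪T x, y⟫ = ⟪x, T y⟫) (lam : ℝ)
    (W : Submodule ℝ V) (hW : ∀ w ∈ W, T w ∈ W) :
    ∀ w ∈ W, ((Submodule.orthogonalProjectionOnto (Module.End.eigenspace (T : V →ₗ[ℝ] V) lam) w : V)) ∈ W := by
  intro w hw
  set E := Module.End.eigenspace (T : V →ₗ[ℝ] V) lam with hE
  set p : V := (Submodule.orthogonalProjectionOnto E w : V) with hp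
  set a : V := (Submodule.orthogonalProjectionOnto W p : V) with ha
  set b : V := p - a with hb
  have haW : a ∈ W := (Submodule.orthogonalProjectionOnto W p).2
  have hbW : b ∈ Wᗮ := Submodule.sub_starProjection_mem_orthogonal (K := W) p
  have hpE : p ∈ E := (Submodule.orthogonalProjectionOnto E w).2
  have hTperp : ∀ x ∈ Wᗮ, T x ∈ Wᗮ := by
    intro x hx
    rw [Submodule.mem_orthogonal]
    intro y hy
    rw [← hT]
    exact (Submodule.mem_orthogonal W x).mp hx (T y) (hW y hy)
  have hTp : T p = lam • p := Module.End.mem_eigenspace_iff.mp hpE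
  -- show b is an eigenvector
  have hkey : T b - lam • b = lam • a - T a := by
    have : T a + T b = lam • a + lam • b := by
      have : T (a + b) = lam • (a + b) := by
        have : a + b = p := by rw [hb]; abel
        rw [this, hTp]
      simpa [map_add, smul_add] using this
    linear_combination (norm := module) this
  have hzero : T b - lam • b = 0 := by
    have h1 : T b - lam • b ∈ Wᗮ := Submodule.sub_mem _ (hTperp b hbW) (Submodule.smul_mem _ _ hbW)
    have h2 : T b - lam • b ∈ W := hkey ▸ Submodule.sub_mem _ (Submodule.smul_mem _ _ haW) (hW a haW)
    have := (Submodule.mem_orthogonal W _).mp h1 _ h2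
    exact inner_self_eq_zero.mp this
  have hbE : b ∈ E := Module.End.mem_eigenspace_iff.mpr (by linear_combination (norm := module) hzero)
  -- now show b = 0
  have h1 : ⟪w - p, b⟫ = 0 := by
    rw [real_inner_comm]
    exact (Submodule.mem_orthogonal E (w - p)).mp
      (Submodule.sub_starProjection_mem_orthogonal (K := E) w) b hbE
  have h2 : ⟪w, b⟫ = 0 := (Submodule.mem_orthogonal W b).mp hbW w hw
  have h3 : ⟪a, b⟫ = 0 := (Submodule.mem_orthogonal W b).mp hbW a haW
  have h4 : ⟪p, b⟫ = 0 := by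
    have : ⟪w, b⟫ - ⟪p, b⟫ = 0 := by rw [← inner_sub_left]; exact h1
    linarith
  have h5 : ⟪b, b⟫ = (0 : ℝ) := by
    have : ⟪p, b⟫ - ⟪a, b⟫ = ⟪b, b⟫ := by rw [← inner_sub_left]
    linarith
  have hb0 : b = 0 := inner_self_eq_zero.mp h5
  have : p = a := by rw [← sub_eq_zero]; exact hb0
  rw [this]; exact haW

/-- Let `V` be a finite-dimensional real inner product space,
`S, T : V → V` linear with `T` symmetric, `U ⊆ V` a `T`-invariant subspace such that
`e^{tS}(U)` is `T`-invariant for all `t`. Then for every eigenvalue `λ` of `T`,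
`U` is invariant under the commutator `[S, π_λ] = S ∘ π_λ − π_λ ∘ S`, where `π_λ`
is the orthogonal projection onto the `λ`-eigenspace of `T`. -/
theorem stmt_0 {V : Type*} [NormedAddCommGroup V] [InnerProductSpace ℝ V]
    [FiniteDimensional ℝ V]
    (S T : V →L[ℝ] V) (hT : ∀ x y : V, ⟪T x, y⟫ = ⟪x, T y⟫)
    (U : Submodule ℝ V) (hTU : ∀ u ∈ U, T u ∈ U)
    (hexp : ∀ t : ℝ, ∀ v ∈ U.map (NormedSpace.exp (t • S)).toLinearMap,
      T v ∈ U.map (NormedSpace.exp (t • S)).toLinearMap)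
    (lam : ℝ) (hlam : Module.End.HasEigenvalue (T : V →ₗ[ℝ] V) lam) :
    ∀ u ∈ U,
      S ((Submodule.orthogonalProjectionOnto (Module.End.eigenspace (T : V →ₗ[ℝ] V) lam) u : V))
        - (Submodule.orthogonalProjectionOnto (Module.End.eigenspace (T : V →ₗ[ℝ] V) lam) (S u) : V) ∈ U := by
  intro u hu
  set E := Module.End.eigenspace (T : V →ₗ[ℝ] V) lam with hE
  set P : V →L[ℝ] V := E.subtypeL.comp (Submodule.orthogonalProjectionOnto E) with hP
  set g : ℝ → V := fun t => exp (t • (-S)) (P (exp (t • S) u)) with hg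
  have hgU : ∀ t : ℝ, g t ∈ U := by
    intro t
    have h1 : exp (t • S) u ∈ U.map (exp (t • S)).toLinearMap :=
      ⟨u, hu, rfl⟩
    have h2 : P (exp (t • S) u) ∈ U.map (exp (t • S)).toLinearMap :=
      projA T hT lam _ (hexp t) _ h1
    obtain ⟨u', hu', hEq⟩ := h2
    have hinv : exp (t • (-S)) * exp (t • S) = 1 := by
      rw [smul_neg, ← NormedSpace.exp_add_of_commute_of_mem_ball (𝕂 := ℝ) ((Commute.refl (t • S)).neg_left)
        ((NormedSpace.expSeries_radius_eq_top ℝ (V →L[ℝ] V)).symm ▸ edist_lt_top _ _)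
        ((NormedSpace.expSeries_radius_eq_top ℝ (V →L[ℝ] V)).symm ▸ edist_lt_top _ _)]
      simp
    have : g t = u' := by
      rw [hg]
      show exp (t • (-S)) (P (exp (t • S) u)) = u'
      rw [← hEq]
      show exp (t • (-S)) ((exp (t • S)) u') = u'
      rw [← ContinuousLinearMap.mul_apply, hinv, ContinuousLinearMap.one_apply]
    rw [this]; exact hu'
  -- derivative of g at 0
  have hd2 : HasDerivAt (fun t : ℝ => exp (t • S) u) (S u) 0 := by
    have := (hasDerivAt_exp_smul_const S (0 : ℝ)).clm_apply (hasDerivAt_const (0 : ℝ) u)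
    simpa using this
  have hd3 : HasDerivAt (fun t : ℝ => P (exp (t • S) u)) (P (S u)) 0 := by
    have := (hasDerivAt_const (0 : ℝ) P).clm_apply hd2
    simpa using this
  have hd4 : HasDerivAt (fun t : ℝ => exp (t • (-S))) (-S) 0 := by
    have := hasDerivAt_exp_smul_const (-S) (0 : ℝ)
    simpa using this
  have hdg : HasDerivAt g (P (S u) - S (P u)) 0 := by
    have := hd4.clm_apply hd3
    have h0 : (fun t : ℝ => exp (t • (-S)) (P (exp (t • S) u))) = g := rfl
    rw [h0] at this
    simpa [sub_eq_neg_add] using this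
  -- slope argument
  have hclosed : IsClosed (U : Set V) := Submodule.closed_of_finiteDimensional U
  have hslope : Filter.Tendsto (slope g 0) (nhdsWithin 0 {(0:ℝ)}ᶜ) (nhds (P (S u) - S (P u))) :=
    hasDerivAt_iff_tendsto_slope.mp hdg
  have hdU : P (S u) - S (P u) ∈ U := by
    refine hclosed.mem_of_tendsto hslope (Filter.Eventually.of_forall fun t => ?_)
    have : slope g 0 t = (t - 0)⁻¹ • (g t - g 0) := by
      simp [slope, vsub_eq_sub]
    rw [this]
    exact U.smul_mem _ (U.sub_mem (hgU t) (hgU 0))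
  have : S ((Submodule.orthogonalProjectionOnto E u : V)) - (Submodule.orthogonalProjectionOnto E (S u) : V)
      = -(P (S u) - S (P u)) := by
    simp [hP]
  rw [this]
  exact U.neg_mem hdU
end

section
/- Let V be a finite-dimensional real inner product space, S, T : V → V linear maps with T symmetric, and U ⊆ V a T-invariant subspace such that e^{tS}(U) is T-invariant for all t ∈ ℝ. Write V = ⨁_λ V_λ for the eigenspace decomposition of T. If u ∈ V_λ ∩ U, then for every eigenvalue μ ≠ λ of T, the projection π_μ(S u) lies in U. -/
open scoped RealInnerProductSpace
open Module.End NormedSpace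


section Aux
variable {V : Type*} [NormedAddCommGroup V] [InnerProductSpace ℝ V] [FiniteDimensional ℝ V]

/-- π_μ ∘ T = μ • π_μ for symmetric T. -/
lemma proj_T_apply (T : V →L[ℝ] V) (hT : (T : V →ₗ[ℝ] V).IsSymmetric) (μ : ℝ) (x : V) :
    (Submodule.orthogonalProjectionOnto (eigenspace (T : V →ₗ[ℝ] V) μ) (T x) : V)
      = μ • (Submodule.orthogonalProjectionOnto (eigenspace (T : V →ₗ[ℝ] V) μ) x : V) := by
  set K := eigenspace (T : V →ₗ[ℝ] V) μ with hK
  set π := Submodule.orthogonalProjectionOnto K with hπ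
  have hπK : ((π x : V)) ∈ K := (π x).2
  have hTπ : T (π x : V) = μ • (π x : V) := by
    have := mem_eigenspace_iff.mp hπK
    simpa using this
  have hsplit : T x = μ • (π x : V) + T (x - (π x : V)) := by
    rw [map_sub, hTπ]; abel
  have hmemo : T (x - (π x : V)) ∈ Kᗮ := by
    intro y hy
    have hy' : (T : V →ₗ[ℝ] V) y = μ • y := mem_eigenspace_iff.mp hy
    have h0 : ⟪y, x - (π x : V)⟫ = 0 :=
      (Submodule.mem_orthogonal K _).mp (Submodule.sub_starProjection_mem_orthogonal x) y hy
    calc ⟪y, T (x - (π x : V))⟫ = ⟪T y, x - (π x : V)⟫ := (hT y _).symm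
      _ = μ * ⟪y, x - (π x : V)⟫ := by
          have : T y = μ • y := hy'
          rw [this, real_inner_smul_left]
      _ = 0 := by rw [h0, mul_zero]
  rw [hsplit, map_add]
  have h1 : (π (μ • (π x : V)) : V) = μ • (π x : V) :=
    Submodule.starProjection_eq_self_iff.mpr (K.smul_mem μ hπK)
  have h2 : π (T (x - (π x : V))) = 0 :=
    Submodule.orthogonalProjectionOnto_apply_of_mem_orthogonal hmemo
  push_cast [h1, h2]
  simp [h1, h2]

/-- π_μ maps a T-invariant subspace into itself. -/
lemma proj_mem_of_invariant (T : V →L[ℝ] V) (hT : (T : V →ₗ[ℝ] V).IsSymmetric)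
    (U : Submodule ℝ V) (hTU : ∀ u ∈ U, T u ∈ U) (μ : ℝ) {v : V} (hv : v ∈ U) :
    (Submodule.orthogonalProjectionOnto (eigenspace (T : V →ₗ[ℝ] V) μ) v : V) ∈ U := by
  have hTU' : ∀ x ∈ U, (T : V →ₗ[ℝ] V) x ∈ U := hTU
  set T' : U →ₗ[ℝ] U := (T : V →ₗ[ℝ] V).restrict hTU' with hT'def
  have hT' : T'.IsSymmetric := hT.restrict_invariant hTU'
  have htop : (⨆ ν, eigenspace T' ν) = ⊤ :=
    Submodule.orthogonal_eq_bot_iff.mp hT'.orthogonalComplement_iSup_eigenspaces_eq_bot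
  set K := eigenspace (T : V →ₗ[ℝ] V) μ with hK
  have key : ∀ x : U, ((Submodule.orthogonalProjectionOnto K (x : V)) : V) ∈ U := by
    intro x
    have hx : x ∈ ⨆ ν, eigenspace T' ν := htop ▸ Submodule.mem_top
    refine Submodule.iSup_induction (motive := fun y : U => ((Submodule.orthogonalProjectionOnto K (y : V)) : V) ∈ U)
      (fun ν => eigenspace T' ν) hx ?_ ?_ ?_
    · intro ν y hy
      have hyV : (y : V) ∈ eigenspace (T : V →ₗ[ℝ] V) ν := by
        rw [mem_eigenspace_iff]
        have h1 : T' y = ν • y := mem_eigenspace_iff.mp hy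
        have h2 : ((T' y : U) : V) = T (y : V) := rfl
        calc (T : V →ₗ[ℝ] V) (y : V) = ((T' y : U) : V) := h2.symm
          _ = ν • (y : V) := by rw [h1]; rfl
      by_cases hνμ : ν = μ
      · subst hνμ
        rw [← Submodule.starProjection_apply, Submodule.starProjection_eq_self_iff.mpr hyV]
        exact y.2
      · have hperp : (y : V) ∈ Kᗮ := by
          intro z hz
          exact hT.orthogonalFamily_eigenspaces hνμ ⟨y, hyV⟩ ⟨z, hz⟩ |>.symm ▸
            (hT.orthogonalFamily_eigenspaces (Ne.symm hνμ) ⟨z, hz⟩ ⟨y, hyV⟩)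
        rw [Submodule.orthogonalProjectionOnto_apply_of_mem_orthogonal hperp]
        simp
    · simpa using U.zero_mem
    · intro a b ha hb
      rw [Submodule.coe_add, map_add, Submodule.coe_add]
      exact U.add_mem ha hb
  exact key ⟨v, hv⟩
end Aux

section Main
variable {V : Type*} [NormedAddCommGroup V] [InnerProductSpace ℝ V] [FiniteDimensional ℝ V]

lemma key_mem (S T : V →L[ℝ] V)
    (U : Submodule ℝ V)
    (hexp : ∀ t : ℝ, ∀ v ∈ U.map (NormedSpace.exp (t • S)).toLinearMap,
      T v ∈ U.map (NormedSpace.exp (t • S)).toLinearMap)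
    (lam : ℝ) (u : V) (hTu : T u = lam • u) (huU : u ∈ U) :
    T (S u) - lam • S u ∈ U := by
  set A : V →L[ℝ] V := T - lam • (1 : V →L[ℝ] V) with hA
  set g : ℝ → V := fun t => (exp (t • (-S)) * (A * exp (t • S))) u with hg
  -- each g t lies in U
  have hinv : ∀ t : ℝ, ∀ x : V, exp (t • (-S)) (exp (t • S) x) = x := by
    intro t x
    have hc : Commute (t • (-S)) (t • S) := by
      rw [smul_neg]; exact (Commute.refl (t • S)).neg_left
    have h1 : exp (t • (-S)) * exp (t • S) = 1 := by
      rw [← exp_add_of_commute_of_mem_ball (𝕂 := ℝ) hc ((expSeries_radius_eq_top ℝ (V →L[ℝ] V)).symm ▸ edist_lt_top _ _)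
        ((expSeries_radius_eq_top ℝ (V →L[ℝ] V)).symm ▸ edist_lt_top _ _)]
      simp
    calc exp (t • (-S)) (exp (t • S) x)
        = (exp (t • (-S)) * exp (t • S)) x := rfl
      _ = x := by rw [h1]; rfl
  have hgU : ∀ t : ℝ, g t ∈ U := by
    intro t
    have hy : exp (t • S) u ∈ U.map (exp (t • S)).toLinearMap :=
      ⟨u, huU, rfl⟩
    obtain ⟨a, haU, ha⟩ := hexp t _ hy
    have : g t = a - lam • u := by
      have h1 : A (exp (t • S) u)
          = exp (t • S) (a - lam • u) := by
        simp only [hA, ContinuousLinearMap.sub_apply, ContinuousLinearMap.smul_apply,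
          ContinuousLinearMap.one_apply, map_sub, map_smul]
        have ha' : exp (t • S) a = T (exp (t • S) u) := ha
        rw [ha']
      calc g t = exp (t • (-S)) (A (exp (t • S) u)) := rfl
        _ = exp (t • (-S)) (exp (t • S) (a - lam • u)) := by rw [h1]
        _ = a - lam • u := hinv t _
    rw [this]
    exact U.sub_mem haU (U.smul_mem lam huU)
  -- g 0 = 0
  have hg0 : g 0 = 0 := by
    simp only [hg, zero_smul, exp_zero, one_mul, mul_one]
    simp only [hA, ContinuousLinearMap.one_apply, ContinuousLinearMap.sub_apply,
      ContinuousLinearMap.smul_apply, ContinuousLinearMap.one_apply, hTu]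
    simp [hTu, sub_self]
  -- derivative of g at 0
  have h₁ : HasDerivAt (fun t : ℝ => exp (t • (-S))) (exp ((0:ℝ) • (-S)) * (-S)) 0 :=
    hasDerivAt_exp_smul_const (-S) 0
  have h₂ : HasDerivAt (fun t : ℝ => exp (t • S)) (exp ((0:ℝ) • S) * S) 0 :=
    hasDerivAt_exp_smul_const S 0
  have h₃ : HasDerivAt (fun t : ℝ => A * exp (t • S)) (A * (exp ((0:ℝ) • S) * S)) 0 :=
    h₂.const_mul A
  have h₄ := h₁.mul h₃
  have h₅ := h₄.clm_apply (hasDerivAt_const (0:ℝ) u)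
  have hD : HasDerivAt g ((T (S u) - lam • S u)) 0 := by
    have hAu : A u = 0 := by
      simp [hA, ContinuousLinearMap.sub_apply, hTu]
    convert h₅ using 1
    · rfl
    simp only [zero_smul, exp_zero, one_mul, mul_one, map_zero, add_zero,
      ContinuousLinearMap.add_apply, ContinuousLinearMap.mul_apply, hAu, map_zero, neg_zero,
      ContinuousLinearMap.neg_apply, zero_add]
    simp [hA]
  have hclosed : IsClosed (U : Set V) := Submodule.closed_of_finiteDimensional U
  have htend := hasDerivAt_iff_tendsto_slope.mp hD
  refine hclosed.mem_of_tendsto htend ?_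
  filter_upwards [self_mem_nhdsWithin] with t ht
  have hst : slope g 0 t = t⁻¹ • g t := by
    rw [slope_def_module, hg0, sub_zero, sub_zero]
  rw [hst]
  exact U.smul_mem _ (hgU t)

end Main

/-- Same setup as before: `V` a finite-dimensional real inner product
space, `T` symmetric, `S` any endomorphism, `U` a `T`-invariant subspace with
`e^{tS}(U)` `T`-invariant for all `t`. If `u` lies in the `λ`-eigenspace of `T`
and in `U`, then for every eigenvalue `μ ≠ λ` of `T`, the orthogonal projection
`π_μ (S u)` lies in `U`. -/
theorem stmt_1 {V : Type*} [NormedAddCommGroup V] [InnerProductSpace ℝ V]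
    [FiniteDimensional ℝ V]
    (S T : V →L[ℝ] V) (hT : ∀ x y : V, ⟪T x, y⟫ = ⟪x, T y⟫)
    (U : Submodule ℝ V) (hTU : ∀ u ∈ U, T u ∈ U)
    (hexp : ∀ t : ℝ, ∀ v ∈ U.map (NormedSpace.exp (t • S)).toLinearMap,
      T v ∈ U.map (NormedSpace.exp (t • S)).toLinearMap)
    (lam mu : ℝ) (hlam : Module.End.HasEigenvalue (T : V →ₗ[ℝ] V) lam)
    (hmu : Module.End.HasEigenvalue (T : V →ₗ[ℝ] V) mu) (hne : mu ≠ lam)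
    (u : V) (hu : u ∈ Module.End.eigenspace (T : V →ₗ[ℝ] V) lam) (huU : u ∈ U) :
    (Submodule.orthogonalProjectionOnto (Module.End.eigenspace (T : V →ₗ[ℝ] V) mu) (S u) : V) ∈ U := by
  have hTs : (T : V →ₗ[ℝ] V).IsSymmetric := fun x y => hT x y
  have hTu : T u = lam • u := mem_eigenspace_iff.mp hu
  have hvU : T (S u) - lam • S u ∈ U := key_mem S T U hexp lam u hTu huU
  set K := eigenspace (T : V →ₗ[ℝ] V) mu with hK
  set π := Submodule.orthogonalProjectionOnto K with hπ
  have hπv : (π (T (S u) - lam • S u) : V) = (mu - lam) • (π (S u) : V) := by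
    rw [map_sub, Submodule.coe_sub]
    rw [proj_T_apply T hTs mu (S u)]
    rw [map_smul, Submodule.coe_smul, sub_smul]
  have hπvU : (π (T (S u) - lam • S u) : V) ∈ U :=
    proj_mem_of_invariant T hTs U hTU mu hvU
  rw [hπv] at hπvU
  have h : (π (S u) : V) = (mu - lam)⁻¹ • ((mu - lam) • (π (S u) : V)) := by
    rw [smul_smul, inv_mul_cancel₀ (sub_ne_zero.mpr hne), one_smul]
  rw [h]
  exact U.smul_mem _ hπvU
end

section
/- In the notation of the paper, for X = X₁₃ ∈ 𝔭 ⊂ 𝔰𝔬_{n+2} (n ≥ 3), the Jacobi operator R_X(Y) = −ad_X²(Y) − (3/4)⟨Y, JX⟩ JX on 𝔭 has eigenvalues 0, 1/4, and 1 with eigenspaces: the 0-eigenspace 𝔞 + 𝔭_{θ₂} = span{X₁₃, X₂₄, X₂₅, …, X₂,ₙ₊₂}; the (1/4)-eigenspace span{X₂₃} (within 𝔭); and the 1-eigenspace span{X₁₄, X₁₅, …, X₁,ₙ₊₂}. -/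
open Matrix

def Em {m : ℕ} (i j : Fin m) : Matrix (Fin m) (Fin m) ℝ := Matrix.single i j 1

def Xm {m : ℕ} (i j : Fin m) : Matrix (Fin m) (Fin m) ℝ := Em i j - Em j i

noncomputable def ipm {m : ℕ} (A B : Matrix (Fin m) (Fin m) ℝ) : ℝ := -(1 / 2) * (A * B).trace

def brk {m : ℕ} (A B : Matrix (Fin m) (Fin m) ℝ) : Matrix (Fin m) (Fin m) ℝ := A * B - B * A

lemma Em_mul {m : ℕ} (i j k l : Fin m) :
    Em i j * Em k l = if j = k then Em i l else 0 := by
  unfold Em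
  split
  · next h => subst h; rw [Matrix.single_mul_single_same]; norm_num
  · next h => exact Matrix.single_mul_single_of_ne (c := (1:ℝ)) i j k h 1
lemma Em_trace {m : ℕ} (i j : Fin m) :
    (Em i j).trace = if i = j then 1 else 0 := by
  unfold Em
  split
  · next h => subst h; exact Matrix.trace_single_eq_same i (1:ℝ)
  · next h => exact Matrix.trace_single_eq_of_ne i j (1:ℝ) h

variable {m : ℕ} (a b c j : Fin m)

lemma Lb (hab : a ≠ b) (hac : a ≠ c) (hbc : b ≠ c) (hja : j ≠ a) (hjb : j ≠ b) (hjc : j ≠ c) :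
    brk (Xm a c) (brk (Xm a c) (Xm b j)) = 0 := by
  simp [brk, Xm, mul_sub, sub_mul, mul_add, add_mul, Matrix.smul_mul, Matrix.mul_smul, smul_smul, Em_mul, hab, hac, hbc, hja, hjb, hjc,
    Ne.symm hab, Ne.symm hac, Ne.symm hbc, Ne.symm hja, Ne.symm hjb, Ne.symm hjc]

lemma Lc (hab : a ≠ b) (hac : a ≠ c) (hbc : b ≠ c) :
    brk (Xm a c) (brk (Xm a c) (Xm b c)) = -(Xm b c) := by
  simp [brk, Xm, mul_sub, sub_mul, mul_add, add_mul, Matrix.smul_mul, Matrix.mul_smul, smul_smul, Em_mul, hab, hac, hbc,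
    Ne.symm hab, Ne.symm hac, Ne.symm hbc]

lemma Ld (hac : a ≠ c) (hja : j ≠ a) (hjc : j ≠ c) :
    brk (Xm a c) (brk (Xm a c) (Xm a j)) = -(Xm a j) := by
  simp [brk, Xm, mul_sub, sub_mul, mul_add, add_mul, Matrix.smul_mul, Matrix.mul_smul, smul_smul, Em_mul, hac, hja, hjc,
    Ne.symm hac, Ne.symm hja, Ne.symm hjc]
  abel

lemma Ia (hab : a ≠ b) (hac : a ≠ c) (hbc : b ≠ c) : ipm (Xm a c) (Xm b c) = 0 := by
  simp [ipm, Xm, mul_sub, sub_mul, Em_mul, Em_trace, hab, hac, hbc,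
    Ne.symm hab, Ne.symm hac, Ne.symm hbc]

lemma Ib (hbc : b ≠ c) (hjb : j ≠ b) (hjc : j ≠ c) : ipm (Xm b j) (Xm b c) = 0 := by
  simp [ipm, Xm, mul_sub, sub_mul, Em_mul, Em_trace, hbc, hjb, hjc,
    Ne.symm hbc, Ne.symm hjb, Ne.symm hjc]

lemma Ic (hbc : b ≠ c) : ipm (Xm b c) (Xm b c) = 1 := by
  simp [ipm, Xm, mul_sub, sub_mul, Em_mul, Em_trace, hbc, Ne.symm hbc]
  norm_num

lemma Id' (hab : a ≠ b) (hac : a ≠ c) (hja : j ≠ a) (hjb : j ≠ b) (hjc : j ≠ c) :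
    ipm (Xm a j) (Xm b c) = 0 := by
  simp [ipm, Xm, mul_sub, sub_mul, Em_mul, Em_trace, hab, hac, hja, hjb, hjc,
    Ne.symm hab, Ne.symm hac, Ne.symm hja, Ne.symm hjb, Ne.symm hjc]

lemma brk_add (A B C : Matrix (Fin m) (Fin m) ℝ) : brk A (B + C) = brk A B + brk A C := by
  simp [brk, mul_add, add_mul]; abel
lemma brk_smul (s : ℝ) (A B : Matrix (Fin m) (Fin m) ℝ) : brk A (s • B) = s • brk A B := by
  simp [brk, Matrix.mul_smul, Matrix.smul_mul, smul_sub]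
lemma brk_zero (A : Matrix (Fin m) (Fin m) ℝ) : brk A 0 = 0 := by simp [brk]
lemma ipm_add (A B C : Matrix (Fin m) (Fin m) ℝ) : ipm (A + B) C = ipm A C + ipm B C := by
  simp [ipm, add_mul]; ring
lemma ipm_smul (s : ℝ) (A B : Matrix (Fin m) (Fin m) ℝ) : ipm (s • A) B = s * ipm A B := by
  simp [ipm, Matrix.smul_mul]; ring
lemma ipm_zero (A : Matrix (Fin m) (Fin m) ℝ) : ipm 0 A = 0 := by simp [ipm]


/-- For `X = X₁₃ ∈ 𝔭 ⊂ 𝔰𝔬_{n+2}` (`n ≥ 3`), the Jacobi operator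
`R_X(Y) = −ad_X²(Y) − (3/4)⟨Y, JX⟩JX` on `𝔭` (here `JX = −[X₁₂, X₁₃] = X₂₃`) has
eigenvalues `0`, `1/4`, `1`, with eigenspaces `𝔞 + 𝔭_{θ₂} = span{X₁₃, X₂₄, X₂₅,…,X₂,ₙ₊₂}`,
`span{X₂₃}`, and `span{X₁₄, X₁₅,…,X₁,ₙ₊₂}` respectively.
(The paper's indices `1,…,n+2` are `0,…,n+1` here.) -/
theorem stmt_18 (n : ℕ) (hn : 3 ≤ n)
    (X JX : Matrix (Fin (n + 2)) (Fin (n + 2)) ℝ)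
    (hX : X = Xm (⟨0, by omega⟩ : Fin (n + 2)) ⟨2, by omega⟩)
    (hJX : JX = Xm (⟨1, by omega⟩ : Fin (n + 2)) ⟨2, by omega⟩)
    (RX : Matrix (Fin (n + 2)) (Fin (n + 2)) ℝ → Matrix (Fin (n + 2)) (Fin (n + 2)) ℝ)
    (hRX : ∀ Y, RX Y = -brk X (brk X Y) - ((3 / 4) * ipm Y JX) • JX) :
    (∀ Y ∈ Submodule.span ℝ
        {A : Matrix (Fin (n + 2)) (Fin (n + 2)) ℝ |
          A = Xm (⟨0, by omega⟩ : Fin (n + 2)) ⟨2, by omega⟩ ∨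
          ∃ j : Fin (n + 2), 3 ≤ (j : ℕ) ∧ A = Xm ⟨1, by omega⟩ j},
      RX Y = 0) ∧
    (∀ Y ∈ Submodule.span ℝ
        {A : Matrix (Fin (n + 2)) (Fin (n + 2)) ℝ |
          A = Xm (⟨1, by omega⟩ : Fin (n + 2)) ⟨2, by omega⟩},
      RX Y = (1 / 4 : ℝ) • Y) ∧
    (∀ Y ∈ Submodule.span ℝ
        {A : Matrix (Fin (n + 2)) (Fin (n + 2)) ℝ |
          ∃ j : Fin (n + 2), 3 ≤ (j : ℕ) ∧ A = Xm ⟨0, by omega⟩ j},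
      RX Y = Y) := by
  set i0 : Fin (n + 2) := ⟨0, by omega⟩ with hi0
  set i1 : Fin (n + 2) := ⟨1, by omega⟩ with hi1
  set i2 : Fin (n + 2) := ⟨2, by omega⟩ with hi2
  have h01 : i0 ≠ i1 := by simp [hi0, hi1, Fin.ext_iff]
  have h02 : i0 ≠ i2 := by simp [hi0, hi2, Fin.ext_iff]
  have h12 : i1 ≠ i2 := by simp [hi1, hi2, Fin.ext_iff]
  have hadd : ∀ Y Z, RX (Y + Z) = RX Y + RX Z := by
    intro Y Z
    simp only [hRX, brk_add, ipm_add]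
    module
  have hsmul : ∀ (s : ℝ) Y, RX (s • Y) = s • RX Y := by
    intro s Y
    simp only [hRX, brk_smul, ipm_smul]
    module
  have h0 : RX 0 = 0 := by simp [hRX, brk_zero, ipm_zero]
  refine ⟨?_, ?_, ?_⟩
  · intro Y hY
    induction hY using Submodule.span_induction with
    | mem x hx =>
      rcases hx with hx | ⟨j, hj, hx⟩
      · subst hx
        rw [hRX, hX, hJX]
        have : brk (Xm i0 i2) (Xm i0 i2) = 0 := by simp [brk]
        rw [this, brk_zero, Ia i0 i1 i2 h01 h02 h12]
        simp
      · subst hx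
        have hja : j ≠ i0 := Fin.ne_of_val_ne (by show (j : ℕ) ≠ 0; omega)
        have hjb : j ≠ i1 := Fin.ne_of_val_ne (by show (j : ℕ) ≠ 1; omega)
        have hjc : j ≠ i2 := Fin.ne_of_val_ne (by show (j : ℕ) ≠ 2; omega)
        rw [hRX, hX, hJX, Lb i0 i1 i2 j h01 h02 h12 hja hjb hjc,
          Ib i1 i2 j h12 hjb hjc]
        simp
    | zero => exact h0
    | add x y hx hy ihx ihy => rw [hadd, ihx, ihy, add_zero]
    | smul s x hx ih => rw [hsmul, ih, smul_zero]
  · intro Y hY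
    induction hY using Submodule.span_induction with
    | mem x hx =>
      rw [Set.mem_setOf_eq] at hx
      subst hx
      rw [hRX, hX, hJX, Lc i0 i1 i2 h01 h02 h12, Ic i1 i2 h12]
      module
    | zero => rw [h0, smul_zero]
    | add x y hx hy ihx ihy => rw [hadd, ihx, ihy, smul_add]
    | smul s x hx ih => rw [hsmul, ih, smul_comm]
  · intro Y hY
    induction hY using Submodule.span_induction with
    | mem x hx =>
      obtain ⟨j, hj, hx⟩ := hx
      subst hx
      have hja : j ≠ i0 := Fin.ne_of_val_ne (by show (j : ℕ) ≠ 0; omega)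
      have hjb : j ≠ i1 := Fin.ne_of_val_ne (by show (j : ℕ) ≠ 1; omega)
      have hjc : j ≠ i2 := Fin.ne_of_val_ne (by show (j : ℕ) ≠ 2; omega)
      rw [hRX, hX, hJX, Ld i0 i2 j h02 hja hjc,
        Id' i0 i1 i2 j h01 h02 hja hjb hjc]
      module
    | zero => exact h0
    | add x y hx hy ihx ihy => rw [hadd, ihx, ihy]
    | smul s x hx ih => rw [hsmul, ih]
end
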